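/- 3ε-KKT transfer (Theorem 2.1, final claim): Let (Ū, V̄, λ̄) be an ε-KKT point of the penalized problem with ε > 0, ‖Ū‖_F ≤ σ, ‖V̄‖_F ≤ σ and ‖λ̄‖_2 ≤ σ, and set Û = (Ū + V̄)/2. If the penalty parameter satisfies γ > max{ √(‖𝒜‖_2)(ε + L_f σ + √(s_A) σ²)/(2√(2ε)), √(2L_0 σ³ + 3Lσ)(ε + L_f σ + √(s_A) σ²)/√(2ε) }, then (Û, 2λ̄) is a 3ε-KKT point of the Burer–Monteiro problem. -/

import Mathlib

open Matrix
open scoped BigOperators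

noncomputable section

/-- Frobenius inner product of two real matrices. -/
def frobInner {α β : Type*} [Fintype α] [Fintype β] (X Y : Matrix α β ℝ) : ℝ :=
  ∑ i, ∑ j, X i j * Y i j

/-- Frobenius norm of a real matrix. -/
def frobNorm {α β : Type*} [Fintype α] [Fintype β] (X : Matrix α β ℝ) : ℝ :=
  Real.sqrt (∑ i, ∑ j, (X i j) ^ 2)

/-- Euclidean norm of a real vector. -/
def vecNorm {α : Type*} [Fintype α] (v : α → ℝ) : ℝ :=
  Real.sqrt (∑ i, (v i) ^ 2)

/-- The linear map `𝒜(X) = (⟨A 1, X⟩, …, ⟨A m, X⟩)`. -/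
def Aop {n m : ℕ} (A : Fin m → Matrix (Fin n) (Fin n) ℝ)
    (X : Matrix (Fin n) (Fin n) ℝ) : Fin m → ℝ :=
  fun i => frobInner (A i) X

/-- `s_A = Σ_i ‖A_i‖_F²`. -/
def sA {n m : ℕ} (A : Fin m → Matrix (Fin n) (Fin n) ℝ) : ℝ :=
  ∑ i, (frobNorm (A i)) ^ 2

/-- `(U, V, λ)` is an ε-KKT point of the penalized problem
`min f(UVᵀ) + (γ/2)‖U-V‖² s.t. 𝒜(UVᵀ) = b`, where `grad` denotes the gradient of `f`. -/
def IsPenEpsKKT {n m r : ℕ} (grad : Matrix (Fin n) (Fin n) ℝ → Matrix (Fin n) (Fin n) ℝ)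
    (A : Fin m → Matrix (Fin n) (Fin n) ℝ) (b : Fin m → ℝ) (γ ε : ℝ)
    (U V : Matrix (Fin n) (Fin r) ℝ) (lam : Fin m → ℝ) : Prop :=
  frobNorm (grad (U * Vᵀ) * V + γ • (U - V) + ∑ i, lam i • (A i * V)) ≤ ε ∧
  frobNorm (grad (V * Uᵀ) * U + γ • (V - U) + ∑ i, lam i • (A i * U)) ≤ ε ∧
  vecNorm (fun i => Aop A (U * Vᵀ) i - b i) ≤ ε

/-- `(U, λ)` is an ε-KKT point of the Burer–Monteiro problem
`min f(UUᵀ) s.t. 𝒜(UUᵀ) = b`, where `grad` denotes the gradient of `f`. -/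
def IsBMEpsKKT {n m r : ℕ} (grad : Matrix (Fin n) (Fin n) ℝ → Matrix (Fin n) (Fin n) ℝ)
    (A : Fin m → Matrix (Fin n) (Fin n) ℝ) (b : Fin m → ℝ) (ε : ℝ)
    (U : Matrix (Fin n) (Fin r) ℝ) (lam : Fin m → ℝ) : Prop :=
  frobNorm ((2 : ℝ) • (grad (U * Uᵀ) * U) + ∑ i, lam i • (A i * U)) ≤ ε ∧
  vecNorm (fun i => Aop A (U * Uᵀ) i - b i) ≤ ε

/-- The augmented Lagrangian `L_ρ(U,V,λ)` of the penalized problem. -/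
def augL {n m r : ℕ} (f : Matrix (Fin n) (Fin n) ℝ → ℝ)
    (A : Fin m → Matrix (Fin n) (Fin n) ℝ) (b : Fin m → ℝ) (ρ γ : ℝ)
    (U V : Matrix (Fin n) (Fin r) ℝ) (lam : Fin m → ℝ) : ℝ :=
  f (U * Vᵀ) + γ / 2 * (frobNorm (U - V)) ^ 2
    + ∑ i, lam i * (Aop A (U * Vᵀ) i - b i)
    + ρ / 2 * (vecNorm (fun i => Aop A (U * Vᵀ) i - b i)) ^ 2

/-- The level set `S_β` of the penalty function. -/
def Sset {n m r : ℕ} (f : Matrix (Fin n) (Fin n) ℝ → ℝ)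
    (A : Fin m → Matrix (Fin n) (Fin n) ℝ) (b : Fin m → ℝ) (ρ₀ β : ℝ) :
    Set (Matrix (Fin n) (Fin r) ℝ × Matrix (Fin n) (Fin r) ℝ) :=
  {p | f (p.1 * p.2ᵀ) + ρ₀ / 2 * (frobNorm (p.1 - p.2)) ^ 2
      + ρ₀ / 2 * (vecNorm (fun i => Aop A (p.1 * p.2ᵀ) i - b i)) ^ 2 ≤ β}

/-- `𝒞(U)`: the `nr × m` matrix whose `i`-th column is the vectorization of `A_i U`. -/
def Cmat {n m r : ℕ} (A : Fin m → Matrix (Fin n) (Fin n) ℝ)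
    (U : Matrix (Fin n) (Fin r) ℝ) : Matrix (Fin n × Fin r) (Fin m) ℝ :=
  Matrix.of fun p i => (A i * U) p.1 p.2

/-- Smallest singular value of a real matrix, as the infimum of `‖Mx‖` over unit vectors. -/
def sigmaMin {α β : Type*} [Fintype α] [Fintype β] (M : Matrix α β ℝ) : ℝ :=
  sInf {s | ∃ x : β → ℝ, vecNorm x = 1 ∧ s = vecNorm (M.mulVec x)}

/-- Norm of the full gradient of the augmented Lagrangian at `(U, V, λ)`
(for symmetric `f`, with `grad` the gradient of `f`). -/
def gradAugLNorm {n m r : ℕ} (grad : Matrix (Fin n) (Fin n) ℝ → Matrix (Fin n) (Fin n) ℝ)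
    (A : Fin m → Matrix (Fin n) (Fin n) ℝ) (b : Fin m → ℝ) (ρ γ : ℝ)
    (U V : Matrix (Fin n) (Fin r) ℝ) (lam : Fin m → ℝ) : ℝ :=
  Real.sqrt
    ((frobNorm (grad (U * Vᵀ) * V + γ • (U - V)
        + ∑ i, (lam i + ρ * (Aop A (U * Vᵀ) i - b i)) • (A i * V))) ^ 2
      + (frobNorm (grad (V * Uᵀ) * U + γ • (V - U)
        + ∑ i, (lam i + ρ * (Aop A (U * Vᵀ) i - b i)) • (A i * U))) ^ 2
      + (vecNorm (fun i => Aop A (U * Vᵀ) i - b i)) ^ 2)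

/-- Distance between two primal-dual triples, induced by the Frobenius/Euclidean norms. -/
def tripDist {n m r : ℕ}
    (p q : Matrix (Fin n) (Fin r) ℝ × Matrix (Fin n) (Fin r) ℝ × (Fin m → ℝ)) : ℝ :=
  Real.sqrt ((frobNorm (p.1 - q.1)) ^ 2 + (frobNorm (p.2.1 - q.2.1)) ^ 2
    + (vecNorm (fun i => p.2.2 i - q.2.2 i)) ^ 2)

/-- The set `𝒲` of KKT points of the penalized problem. -/
def KKTset {n m : ℕ} (r : ℕ) (grad : Matrix (Fin n) (Fin n) ℝ → Matrix (Fin n) (Fin n) ℝ)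
    (A : Fin m → Matrix (Fin n) (Fin n) ℝ) (b : Fin m → ℝ) (γ : ℝ) :
    Set (Matrix (Fin n) (Fin r) ℝ × Matrix (Fin n) (Fin r) ℝ × (Fin m → ℝ)) :=
  {p | IsPenEpsKKT grad A b γ 0 p.1 p.2.1 p.2.2}

/-
Write `Û = (Ū + V̄)/2`, `d = (Ū - V̄)/2` and `M = ŪV̄ᵀ`, so that `ÛÛᵀ = (M + Mᵀ)/2 + ddᵀ`.
The Burer–Monteiro residual at `(Û, 2λ̄)` is the sum of the two penalized residuals plus
`(2∇f(ÛÛᵀ) - ∇f(Mᵀ) - ∇f(M))Û + (∇f(M) - ∇f(Mᵀ))d`. Since `M` and `Mᵀ` are symmetric about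
`(M + Mᵀ)/2` at distance `‖Mᵀ - M‖/2 ≤ σ‖Ū - V̄‖`, the Lipschitz Hessian bounds the second
difference of `∇f`, and the extra terms are at most `(L₀σ³ + 3Lσ/2)‖Ū - V̄‖²`. Feasibility changes
only by `𝒜(ddᵀ)`, because the symmetric `Aᵢ` do not see the skew part of `M`. Finally the first
penalized condition gives `γ‖Ū - V̄‖ ≤ ε + L_f σ + √s_A σ²`, so a large `γ` makes both quadratic
errors smaller than the available `ε` and `2ε`.
-/

attribute [local instance] Matrix.frobeniusSeminormedAddCommGroup
  Matrix.frobeniusNormedAddCommGroup Matrix.frobeniusNormedSpace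

lemma sub_le_of_hasDerivAt_le_two_mul {χ χ' : ℝ → ℝ} {K : ℝ}
    (hχ : ∀ t, HasDerivAt χ (χ' t) t) (hχ' : ∀ t ∈ Set.Icc (0 : ℝ) 1, χ' t ≤ 2 * K * t) :
    χ 1 - χ 0 ≤ K := by
  set B : ℝ → ℝ := fun t => χ 0 + K * t ^ 2
  have hB : ∀ t, HasDerivAt B (2 * K * t) t := fun t =>
    (((hasDerivAt_pow 2 t).const_mul K).const_add (χ 0)).congr_deriv (by ring)
  have h := image_le_of_deriv_right_le_deriv_boundary (a := 0) (b := 1) (B := B)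
    (fun t _ => (hχ t).continuousAt.continuousWithinAt) (fun t _ => (hχ t).hasDerivWithinAt)
    (by simp [B]) (fun t _ => (hB t).continuousAt.continuousWithinAt)
    (fun t _ => (hB t).hasDerivWithinAt) (fun t ht => hχ' t (Set.Ico_subset_Icc_self ht))
    (Set.right_mem_Icc.2 zero_le_one)
  simp only [B, one_pow, mul_one] at h
  linarith

lemma mul_sq_lt_of_sqrt_mul_div_lt {K c γ e D : ℝ} (hγ : 0 < γ) (hD : 0 ≤ D) (hDc : γ * D ≤ c)
    (he : 0 < e) (h : √K * c / √e < γ) : K * D ^ 2 < e := by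
  rcases le_or_gt K 0 with hK | hK
  · nlinarith [sq_nonneg D]
  rw [div_lt_iff₀ (Real.sqrt_pos.2 he)] at h
  have hc : K * (γ * D) ^ 2 ≤ K * c ^ 2 :=
    mul_le_mul_of_nonneg_left (pow_le_pow_left₀ (mul_nonneg hγ.le hD) hDc 2) hK.le
  have hsq := pow_lt_pow_left₀ h
    (mul_nonneg (Real.sqrt_nonneg K) ((mul_nonneg hγ.le hD).trans hDc)) two_ne_zero
  rw [mul_pow, mul_pow, Real.sq_sqrt hK.le, Real.sq_sqrt he.le] at hsq
  nlinarith [sq_pos_of_pos hγ]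

section Frobenius

variable {α β κ : Type*} [Fintype α] [Fintype β] [Fintype κ]

lemma frobNorm_eq_norm (X : Matrix α β ℝ) : frobNorm X = ‖X‖ := by
  simp [frobNorm, Matrix.frobenius_norm_def, Real.sqrt_eq_rpow]

lemma frobInner_le_norm_mul_norm (X Y : Matrix α β ℝ) : frobInner X Y ≤ ‖X‖ * ‖Y‖ := by
  simp only [← frobNorm_eq_norm, frobInner, frobNorm, ← Fintype.sum_prod_type']
  exact Real.sum_mul_le_sqrt_mul_sqrt _ _ _

lemma frobInner_self (X : Matrix α β ℝ) : frobInner X X = ‖X‖ ^ 2 := by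
  rw [← frobNorm_eq_norm, frobNorm, Real.sq_sqrt (by positivity)]
  simp only [frobInner, sq]

lemma frobInner_add_right (X Y Z : Matrix α β ℝ) :
    frobInner X (Y + Z) = frobInner X Y + frobInner X Z := by
  simp only [frobInner, Matrix.add_apply, mul_add, Finset.sum_add_distrib]

lemma frobInner_sub_right (X Y Z : Matrix α β ℝ) :
    frobInner X (Y - Z) = frobInner X Y - frobInner X Z := by
  simp only [frobInner, Matrix.sub_apply, mul_sub, Finset.sum_sub_distrib]

lemma frobInner_smul_right (c : ℝ) (X Y : Matrix α β ℝ) :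
    frobInner X (c • Y) = c * frobInner X Y := by
  simp only [frobInner, Matrix.smul_apply, smul_eq_mul, Finset.mul_sum]
  exact Finset.sum_congr rfl fun _ _ => Finset.sum_congr rfl fun _ _ => by ring

lemma frobInner_transpose_right {A : Matrix α α ℝ} (hA : Aᵀ = A) (X : Matrix α α ℝ) :
    frobInner A Xᵀ = frobInner A X := by
  conv_lhs => rw [← hA]
  simp only [frobInner, Matrix.transpose_apply]
  exact Finset.sum_comm

lemma vecNorm_eq_norm (v : α → ℝ) : vecNorm v = ‖WithLp.toLp 2 v‖ := by
  simp [vecNorm, EuclideanSpace.norm_eq]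

lemma vecNorm_add_le (x y : α → ℝ) :
    vecNorm (fun i => x i + y i) ≤ vecNorm x + vecNorm y := by
  simp only [vecNorm_eq_norm]
  exact norm_add_le (WithLp.toLp 2 x) (WithLp.toLp 2 y)

lemma norm_mul_transpose_le (U V : Matrix α κ ℝ) : ‖U * Vᵀ‖ ≤ ‖U‖ * ‖V‖ :=
  (Matrix.frobenius_norm_mul _ _).trans_eq (by rw [Matrix.frobenius_norm_transpose])

lemma norm_sum_smul_mul_le {ι : Type*} [Fintype ι] (A : ι → Matrix α α ℝ) (lam : ι → ℝ)
    (V : Matrix α κ ℝ) :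
    ‖∑ i, lam i • (A i * V)‖ ≤ vecNorm lam * √(∑ i, ‖A i‖ ^ 2) * ‖V‖ := by
  have hCS : ∑ i, |lam i| * ‖A i‖ ≤ vecNorm lam * √(∑ i, ‖A i‖ ^ 2) := by
    simpa only [vecNorm, sq_abs] using
      Real.sum_mul_le_sqrt_mul_sqrt Finset.univ (fun i => |lam i|) (fun i => ‖A i‖)
  calc ‖∑ i, lam i • (A i * V)‖ ≤ ∑ i, |lam i| * (‖A i‖ * ‖V‖) := by
        refine (norm_sum_le _ _).trans (Finset.sum_le_sum fun i _ => ?_)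
        rw [norm_smul, Real.norm_eq_abs]
        exact mul_le_mul_of_nonneg_left (Matrix.frobenius_norm_mul _ _) (abs_nonneg _)
    _ = (∑ i, |lam i| * ‖A i‖) * ‖V‖ := by simp only [Finset.sum_mul, mul_assoc]
    _ ≤ _ := mul_le_mul_of_nonneg_right hCS (norm_nonneg _)

end Frobenius

section SecondDifference

variable {E : Type*} [NormedAddCommGroup E] [NormedSpace ℝ E]
  {α β : Type*} [Fintype α] [Fintype β]
  {g : E → Matrix α β ℝ} {hess : E → E → Matrix α β ℝ}

lemma hasDerivAt_frobInner_comp_line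
    (hhess : ∀ X H : E, ∀ i j, HasDerivAt (fun t : ℝ => g (X + t • H) i j) (hess X H i j) 0)
    (W : Matrix α β ℝ) (X H : E) (t : ℝ) :
    HasDerivAt (fun s : ℝ => frobInner W (g (X + s • H))) (frobInner W (hess (X + t • H) H)) t := by
  have hline : ∀ i j, HasDerivAt (fun s : ℝ => g (X + s • H) i j) (hess (X + t • H) H i j) t := by
    intro i j
    have h : HasDerivAt (fun u : ℝ => g (X + t • H + u • H) i j) (hess (X + t • H) H i j)
        (t - t) := by rw [sub_self]; exact hhess _ H i j
    have hshift : (fun s : ℝ => g (X + s • H) i j) = fun s => g (X + t • H + (s - t) • H) i j :=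
      funext fun s => by rw [add_assoc, ← add_smul, add_sub_cancel]
    exact hshift ▸ h.comp_sub_const t t
  exact HasDerivAt.fun_sum fun i _ => HasDerivAt.fun_sum fun j _ => (hline i j).const_mul (W i j)

theorem norm_second_difference_le {s : Set E} (hs : Convex ℝ s) {L0 : ℝ} (hL0 : 0 ≤ L0)
    (hhess : ∀ X H : E, ∀ i j, HasDerivAt (fun t : ℝ => g (X + t • H) i j) (hess X H i j) 0)
    (hhessLip : ∀ X ∈ s, ∀ Y ∈ s, ∀ H, ‖hess X H - hess Y H‖ ≤ L0 * ‖H‖ * ‖X - Y‖)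
    {X H : E} (hplus : X + H ∈ s) (hminus : X - H ∈ s) :
    ‖g (X + H) + g (X - H) - (2 : ℝ) • g X‖ ≤ L0 * ‖H‖ ^ 2 := by
  set W := g (X + H) + g (X - H) - (2 : ℝ) • g X
  have hmem : ∀ t ∈ Set.Icc (0 : ℝ) 1, X + t • H ∈ s ∧ X + (-t) • H ∈ s := by
    rintro t ⟨ht0, ht1⟩
    have hcomb : ∀ u : ℝ, X + u • H = ((1 + u) / 2) • (X + H) + ((1 - u) / 2) • (X - H) :=
      fun u => by module
    refine ⟨?_, ?_⟩ <;> rw [hcomb] <;>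
      exact hs hplus hminus (by linarith) (by linarith) (by ring)
  -- `χ t = ⟨W, g (X + t H) + g (X - t H)⟩`, whose increment over `[0, 1]` is `‖W‖²`
  let ψ : ℝ → ℝ := fun t => frobInner W (g (X + t • H))
  let ψ' : ℝ → ℝ := fun t => frobInner W (hess (X + t • H) H)
  have hψ := hasDerivAt_frobInner_comp_line hhess W X H
  have hχ : ∀ t, HasDerivAt (fun t => ψ t + ψ (-t)) (ψ' t - ψ' (-t)) t := fun t =>
    ((hψ t).add ((hψ (-t)).comp t (hasDerivAt_neg t))).congr_deriv (by ring)
  have hχ' : ∀ t ∈ Set.Icc (0 : ℝ) 1, ψ' t - ψ' (-t) ≤ 2 * (L0 * ‖H‖ ^ 2 * ‖W‖) * t := by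
    intro t ht
    obtain ⟨hp, hm⟩ := hmem t ht
    have hdist : ‖X + t • H - (X + (-t) • H)‖ = 2 * t * ‖H‖ := by
      rw [show X + t • H - (X + (-t) • H) = (2 * t) • H by module, norm_smul,
        Real.norm_of_nonneg (by linarith [ht.1])]
    calc ψ' t - ψ' (-t) = frobInner W (hess (X + t • H) H - hess (X + (-t) • H) H) :=
          (frobInner_sub_right _ _ _).symm
      _ ≤ ‖W‖ * (L0 * ‖H‖ * (2 * t * ‖H‖)) :=
          (frobInner_le_norm_mul_norm _ _).trans <| mul_le_mul_of_nonneg_left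
            (hdist ▸ hhessLip _ hp _ hm H) (norm_nonneg _)
      _ = 2 * (L0 * ‖H‖ ^ 2 * ‖W‖) * t := by ring
  have hinc : ‖W‖ ^ 2 ≤ L0 * ‖H‖ ^ 2 * ‖W‖ := by
    have h := sub_le_of_hasDerivAt_le_two_mul hχ hχ'
    have hW : (ψ 1 + ψ (-1)) - (ψ 0 + ψ (-0)) = frobInner W W := by
      simp only [ψ, W, frobInner_sub_right, frobInner_add_right, frobInner_smul_right]
      simp only [one_smul, neg_smul, zero_smul, add_zero, neg_zero, ← sub_eq_add_neg]
      ring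
    rwa [hW, frobInner_self] at h
  rcases (norm_nonneg W).eq_or_lt with h0 | h0
  · rw [← h0]; positivity
  · nlinarith

end SecondDifference

section MatrixAlgebra

variable {ι κ : Type*} [Fintype κ]

lemma half_add_mul_transpose (U V : Matrix ι κ ℝ) :
    ((2 : ℝ)⁻¹ • (U + V)) * ((2 : ℝ)⁻¹ • (U + V))ᵀ
      = (2 : ℝ)⁻¹ • (U * Vᵀ + V * Uᵀ) + ((2 : ℝ)⁻¹ • (U - V)) * ((2 : ℝ)⁻¹ • (U - V))ᵀ := by
  simp only [Matrix.transpose_smul, Matrix.transpose_add, Matrix.transpose_sub,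
    Matrix.smul_mul, Matrix.mul_smul, Matrix.add_mul, Matrix.mul_add, Matrix.sub_mul,
    Matrix.mul_sub]
  module

variable [Fintype ι] {σ : ℝ}

lemma norm_half_smul_add_le {U V : Matrix ι κ ℝ} (hU : ‖U‖ ≤ σ) (hV : ‖V‖ ≤ σ) :
    ‖(2 : ℝ)⁻¹ • (U + V)‖ ≤ σ := by
  rw [norm_smul, Real.norm_of_nonneg (by norm_num)]
  linarith [norm_add_le U V]

lemma norm_mul_transpose_le_sq {U V : Matrix ι κ ℝ} (hU : ‖U‖ ≤ σ) (hV : ‖V‖ ≤ σ) :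
    ‖U * Vᵀ‖ ≤ σ ^ 2 :=
  (norm_mul_transpose_le U V).trans <| by
    nlinarith [mul_le_mul hU hV (norm_nonneg V) ((norm_nonneg U).trans hU)]

lemma norm_half_smul_mul_transpose_le (U : Matrix ι κ ℝ) :
    ‖((2 : ℝ)⁻¹ • U) * ((2 : ℝ)⁻¹ • U)ᵀ‖ ≤ ‖U‖ ^ 2 / 4 := by
  refine (norm_mul_transpose_le _ _).trans_eq ?_
  rw [norm_smul, Real.norm_of_nonneg (by norm_num)]
  ring

lemma norm_mul_transpose_sub_le {U V : Matrix ι κ ℝ} (hV : ‖V‖ ≤ σ) :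
    ‖V * Uᵀ - U * Vᵀ‖ ≤ 2 * σ * ‖U - V‖ := by
  have hsplit : V * Uᵀ - U * Vᵀ = V * (U - V)ᵀ - (U - V) * Vᵀ := by
    simp only [Matrix.transpose_sub, Matrix.mul_sub, Matrix.sub_mul]
    abel
  rw [hsplit]
  refine (norm_sub_le _ _).trans ?_
  have h₁ := norm_mul_transpose_le V (U - V)
  have h₂ := norm_mul_transpose_le (U - V) V
  nlinarith [norm_nonneg (U - V)]

end MatrixAlgebra

lemma bm_residual_eq {ι ι' κ : Type*} [Fintype ι] [Fintype ι'] (P M Mt : Matrix ι ι ℝ)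
    (A : ι' → Matrix ι ι ℝ) (lam : ι' → ℝ) (γ : ℝ) (U V : Matrix ι κ ℝ) :
    (2 : ℝ) • (P * ((2 : ℝ)⁻¹ • (U + V))) + ∑ i, (2 * lam i) • (A i * ((2 : ℝ)⁻¹ • (U + V)))
      = (M * V + γ • (U - V) + ∑ i, lam i • (A i * V))
        + (Mt * U + γ • (V - U) + ∑ i, lam i • (A i * U))
        + (((2 : ℝ) • P - Mt - M) * ((2 : ℝ)⁻¹ • (U + V)) + (M - Mt) * ((2 : ℝ)⁻¹ • (U - V))) := by
  have hsum : ∑ i, (2 * lam i) • (A i * ((2 : ℝ)⁻¹ • (U + V)))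
      = ∑ i, lam i • (A i * U) + ∑ i, lam i • (A i * V) := by
    rw [← Finset.sum_add_distrib]
    refine Finset.sum_congr rfl fun i _ => ?_
    rw [Matrix.mul_smul, smul_smul, mul_comm 2, mul_assoc, mul_inv_cancel₀ two_ne_zero, mul_one,
      Matrix.mul_add, smul_add]
  rw [hsum]
  simp only [Matrix.sub_mul, Matrix.smul_mul, Matrix.mul_smul, Matrix.mul_add, Matrix.mul_sub]
  module

section Stationarity

variable {ι κ : Type*} [Fintype ι] [Fintype κ]
  {G : Matrix ι ι ℝ → Matrix ι ι ℝ} {hess : Matrix ι ι ℝ → Matrix ι ι ℝ → Matrix ι ι ℝ}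
  {σ L L0 : ℝ}

lemma norm_two_smul_grad_sub_le (hL : 0 ≤ L) (hL0 : 0 ≤ L0)
    (hhess : ∀ X H : Matrix ι ι ℝ, ∀ i j,
      HasDerivAt (fun t : ℝ => G (X + t • H) i j) (hess X H i j) 0)
    (hgradLip : ∀ X Y : Matrix ι ι ℝ, ‖X‖ ≤ σ ^ 2 → ‖Y‖ ≤ σ ^ 2 →
      ‖G X - G Y‖ ≤ L * ‖X - Y‖)
    (hhessLip : ∀ X Y H : Matrix ι ι ℝ, ‖X‖ ≤ σ ^ 2 → ‖Y‖ ≤ σ ^ 2 →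
      ‖hess X H - hess Y H‖ ≤ L0 * ‖H‖ * ‖X - Y‖)
    {U V : Matrix ι κ ℝ} (hU : ‖U‖ ≤ σ) (hV : ‖V‖ ≤ σ) :
    ‖(2 : ℝ) • G (((2 : ℝ)⁻¹ • (U + V)) * ((2 : ℝ)⁻¹ • (U + V))ᵀ) - G (V * Uᵀ) - G (U * Vᵀ)‖
      ≤ (L / 2 + L0 * σ ^ 2) * ‖U - V‖ ^ 2 := by
  set S := (2 : ℝ)⁻¹ • (U * Vᵀ + V * Uᵀ)
  set Δ := (2 : ℝ)⁻¹ • (V * Uᵀ - U * Vᵀ)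
  have hM := norm_mul_transpose_le_sq hU hV
  have hMt := norm_mul_transpose_le_sq hV hU
  have hS : ‖S‖ ≤ σ ^ 2 := by
    rw [norm_smul, Real.norm_of_nonneg (by norm_num)]
    linarith [norm_add_le (U * Vᵀ) (V * Uᵀ)]
  have hΔ : ‖Δ‖ ≤ σ * ‖U - V‖ := by
    rw [norm_smul, Real.norm_of_nonneg (by norm_num)]
    linarith [norm_mul_transpose_sub_le (U := U) hV]
  have hplus : S + Δ = V * Uᵀ := by module
  have hminus : S - Δ = U * Vᵀ := by module
  have hcurv : ‖G (V * Uᵀ) + G (U * Vᵀ) - (2 : ℝ) • G S‖ ≤ L0 * ‖Δ‖ ^ 2 := by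
    have h := norm_second_difference_le (convex_closedBall (0 : Matrix ι ι ℝ) (σ ^ 2)) hL0 hhess
      (fun X hX Y hY H => hhessLip X Y H (mem_closedBall_zero_iff.1 hX)
        (mem_closedBall_zero_iff.1 hY))
      (by rwa [mem_closedBall_zero_iff, hplus]) (by rwa [mem_closedBall_zero_iff, hminus])
    rwa [hplus, hminus] at h
  have hlip : ‖G (((2 : ℝ)⁻¹ • (U + V)) * ((2 : ℝ)⁻¹ • (U + V))ᵀ) - G S‖
      ≤ L * (‖U - V‖ ^ 2 / 4) := by
    refine (hgradLip _ _ (norm_mul_transpose_le_sq (norm_half_smul_add_le hU hV)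
      (norm_half_smul_add_le hU hV)) hS).trans (mul_le_mul_of_nonneg_left ?_ hL)
    rw [half_add_mul_transpose, add_sub_cancel_left]
    exact norm_half_smul_mul_transpose_le _
  rw [show ∀ P Q R : Matrix ι ι ℝ,
      (2 : ℝ) • P - Q - R = (2 : ℝ) • (P - G S) - (Q + R - (2 : ℝ) • G S) from
    fun P Q R => by module]
  refine (norm_sub_le _ _).trans ?_
  rw [norm_smul, Real.norm_of_nonneg (by norm_num)]
  nlinarith [mul_le_mul_of_nonneg_left (pow_le_pow_left₀ (norm_nonneg Δ) hΔ 2) hL0]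

lemma norm_bm_residual_le {ι' : Type*} [Fintype ι'] (hL : 0 ≤ L) (hL0 : 0 ≤ L0)
    (hhess : ∀ X H : Matrix ι ι ℝ, ∀ i j,
      HasDerivAt (fun t : ℝ => G (X + t • H) i j) (hess X H i j) 0)
    (hgradLip : ∀ X Y : Matrix ι ι ℝ, ‖X‖ ≤ σ ^ 2 → ‖Y‖ ≤ σ ^ 2 →
      ‖G X - G Y‖ ≤ L * ‖X - Y‖)
    (hhessLip : ∀ X Y H : Matrix ι ι ℝ, ‖X‖ ≤ σ ^ 2 → ‖Y‖ ≤ σ ^ 2 →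
      ‖hess X H - hess Y H‖ ≤ L0 * ‖H‖ * ‖X - Y‖)
    (A : ι' → Matrix ι ι ℝ) (lam : ι' → ℝ) (γ : ℝ)
    {U V : Matrix ι κ ℝ} (hU : ‖U‖ ≤ σ) (hV : ‖V‖ ≤ σ) :
    ‖(2 : ℝ) • (G (((2 : ℝ)⁻¹ • (U + V)) * ((2 : ℝ)⁻¹ • (U + V))ᵀ) * ((2 : ℝ)⁻¹ • (U + V)))
        + ∑ i, (2 * lam i) • (A i * ((2 : ℝ)⁻¹ • (U + V)))‖
      ≤ ‖G (U * Vᵀ) * V + γ • (U - V) + ∑ i, lam i • (A i * V)‖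
        + ‖G (V * Uᵀ) * U + γ • (V - U) + ∑ i, lam i • (A i * U)‖
        + (2 * L0 * σ ^ 3 + 3 * L * σ) / 2 * ‖U - V‖ ^ 2 := by
  rw [bm_residual_eq _ (G (U * Vᵀ)) (G (V * Uᵀ)) A lam γ]
  have hσ : 0 ≤ σ := (norm_nonneg U).trans hU
  have hfirst := (Matrix.frobenius_norm_mul _ _).trans <| mul_le_mul
    (norm_two_smul_grad_sub_le hL hL0 hhess hgradLip hhessLip hU hV)
    (norm_half_smul_add_le hU hV) (norm_nonneg _) (by positivity)
  have hskew : ‖G (U * Vᵀ) - G (V * Uᵀ)‖ ≤ L * (2 * σ * ‖U - V‖) := by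
    refine (hgradLip _ _ (norm_mul_transpose_le_sq hU hV) (norm_mul_transpose_le_sq hV hU)).trans
      (mul_le_mul_of_nonneg_left ?_ hL)
    rw [← norm_neg, neg_sub]
    exact norm_mul_transpose_sub_le hV
  have hsecond := (Matrix.frobenius_norm_mul _ _).trans <|
    mul_le_mul_of_nonneg_right hskew (norm_nonneg ((2 : ℝ)⁻¹ • (U - V)))
  rw [norm_smul, Real.norm_of_nonneg (by norm_num)] at hsecond
  refine (norm_add_le _ _).trans (add_le_add (norm_add_le _ _) (norm_add_le _ _)) |>.trans ?_
  nlinarith [hfirst, hsecond]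

end Stationarity

lemma mul_norm_sub_le_of_residual_le {n m : ℕ} {κ : Type*} [Fintype κ]
    {A : Fin m → Matrix (Fin n) (Fin n) ℝ} {lam : Fin m → ℝ} {G : Matrix (Fin n) (Fin n) ℝ}
    {U V : Matrix (Fin n) κ ℝ} {γ ε Lf σ : ℝ} (hγ : 0 ≤ γ) (hG : ‖G‖ ≤ Lf) (hV : ‖V‖ ≤ σ)
    (hlam : vecNorm lam ≤ σ) (hres : ‖G * V + γ • (U - V) + ∑ i, lam i • (A i * V)‖ ≤ ε) :
    γ * ‖U - V‖ ≤ ε + Lf * σ + √(sA A) * σ ^ 2 := by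
  have hGV : ‖G * V‖ ≤ Lf * σ :=
    (Matrix.frobenius_norm_mul _ _).trans
      (mul_le_mul hG hV (norm_nonneg _) ((norm_nonneg _).trans hG))
  have hsum : ‖∑ i, lam i • (A i * V)‖ ≤ √(sA A) * σ ^ 2 := by
    have hsA : sA A = ∑ i, ‖A i‖ ^ 2 := by simp only [sA, frobNorm_eq_norm]
    refine (hsA ▸ norm_sum_smul_mul_le A lam V).trans ?_
    have := mul_le_mul (mul_le_mul_of_nonneg_right hlam (Real.sqrt_nonneg (sA A))) hV
      (norm_nonneg _) (mul_nonneg ((norm_nonneg V).trans hV) (Real.sqrt_nonneg _))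
    nlinarith
  set R := G * V + γ • (U - V) + ∑ i, lam i • (A i * V)
  have hsplit : γ • (U - V) = R - G * V - ∑ i, lam i • (A i * V) := by simp only [R]; abel
  calc γ * ‖U - V‖ = ‖R - G * V - ∑ i, lam i • (A i * V)‖ := by
        rw [← hsplit, norm_smul, Real.norm_of_nonneg hγ]
    _ ≤ ‖R‖ + ‖G * V‖ + ‖∑ i, lam i • (A i * V)‖ :=
        (norm_sub_le _ _).trans (add_le_add_left (norm_sub_le _ _) _)
    _ ≤ _ := add_le_add (add_le_add hres hGV) hsum

lemma vecNorm_Aop_half_add_sub_le {n m : ℕ} {κ : Type*} [Fintype κ]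
    {A : Fin m → Matrix (Fin n) (Fin n) ℝ} (hAsym : ∀ i, (A i)ᵀ = A i) {nA : ℝ}
    (hnA : ∀ X : Matrix (Fin n) (Fin n) ℝ, vecNorm (Aop A X) ≤ nA * ‖X‖)
    (b : Fin m → ℝ) (U V : Matrix (Fin n) κ ℝ) :
    vecNorm (fun i => Aop A (((2 : ℝ)⁻¹ • (U + V)) * ((2 : ℝ)⁻¹ • (U + V))ᵀ) i - b i)
      ≤ vecNorm (fun i => Aop A (U * Vᵀ) i - b i) + max nA 0 * (‖U - V‖ ^ 2 / 4) := by
  set D := ((2 : ℝ)⁻¹ • (U - V)) * ((2 : ℝ)⁻¹ • (U - V))ᵀ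
  have hsplit : (fun i => Aop A (((2 : ℝ)⁻¹ • (U + V)) * ((2 : ℝ)⁻¹ • (U + V))ᵀ) i - b i)
      = fun i => (Aop A (U * Vᵀ) i - b i) + Aop A D i := by
    funext i
    have hskew : frobInner (A i) (V * Uᵀ) = frobInner (A i) (U * Vᵀ) := by
      rw [← frobInner_transpose_right (hAsym i), Matrix.transpose_mul, Matrix.transpose_transpose]
    simp only [Aop, half_add_mul_transpose, frobInner_add_right, frobInner_smul_right, hskew]
    ring
  rw [hsplit]
  refine (vecNorm_add_le _ _).trans (add_le_add le_rfl ?_)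
  calc vecNorm (Aop A D) ≤ max nA 0 * ‖D‖ :=
        (hnA D).trans (mul_le_mul_of_nonneg_right (le_max_left _ _) (norm_nonneg _))
    _ ≤ max nA 0 * (‖U - V‖ ^ 2 / 4) :=
        mul_le_mul_of_nonneg_left (norm_half_smul_mul_transpose_le _) (le_max_right _ _)

theorem threeEps_KKT_transfer_general
    (n m r : ℕ)
    (grad : Matrix (Fin n) (Fin n) ℝ → Matrix (Fin n) (Fin n) ℝ)
    (hess : Matrix (Fin n) (Fin n) ℝ → Matrix (Fin n) (Fin n) ℝ → Matrix (Fin n) (Fin n) ℝ)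
    (hhess : ∀ X H : Matrix (Fin n) (Fin n) ℝ, ∀ i j,
      HasDerivAt (fun t : ℝ => grad (X + t • H) i j) (hess X H i j) 0)
    (A : Fin m → Matrix (Fin n) (Fin n) ℝ) (hAsym : ∀ i, (A i)ᵀ = A i)
    (b : Fin m → ℝ)
    (σ Lf L L0 γ : ℝ)
    (hL : 0 < L) (hL0 : 0 < L0) (hγ : 0 < γ)
    (hgradB : ∀ X : Matrix (Fin n) (Fin n) ℝ, frobNorm X ≤ σ ^ 2 → frobNorm (grad X) ≤ Lf)
    (hgradLip : ∀ X Y : Matrix (Fin n) (Fin n) ℝ, frobNorm X ≤ σ ^ 2 → frobNorm Y ≤ σ ^ 2 →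
      frobNorm (grad X - grad Y) ≤ L * frobNorm (X - Y))
    (hhessLip : ∀ X Y H : Matrix (Fin n) (Fin n) ℝ, frobNorm X ≤ σ ^ 2 → frobNorm Y ≤ σ ^ 2 →
      frobNorm (hess X H - hess Y H) ≤ L0 * frobNorm H * frobNorm (X - Y))
    (nA : ℝ) (hnA : ∀ X : Matrix (Fin n) (Fin n) ℝ, vecNorm (Aop A X) ≤ nA * frobNorm X)
    (ε : ℝ) (hε : 0 < ε)
    (Ub Vb : Matrix (Fin n) (Fin r) ℝ) (lamb : Fin m → ℝ)
    (hKKT : IsPenEpsKKT grad A b γ ε Ub Vb lamb)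
    (hUb : frobNorm Ub ≤ σ) (hVb : frobNorm Vb ≤ σ) (hlamb : vecNorm lamb ≤ σ)
    (Uh : Matrix (Fin n) (Fin r) ℝ) (hUh : Uh = (2 : ℝ)⁻¹ • (Ub + Vb))
    (hγbig : γ > max
      (Real.sqrt nA * (ε + Lf * σ + Real.sqrt (sA A) * σ ^ 2) / (2 * Real.sqrt (2 * ε)))
      (Real.sqrt (2 * L0 * σ ^ 3 + 3 * L * σ) * (ε + Lf * σ + Real.sqrt (sA A) * σ ^ 2)
        / Real.sqrt (2 * ε))) :
    IsBMEpsKKT grad A b (3 * ε) Uh (fun i => 2 * lamb i) := by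
  obtain ⟨hres₁, hres₂, hfeas⟩ := hKKT
  simp only [frobNorm_eq_norm] at hres₁ hres₂ hUb hVb hgradB hgradLip hhessLip hnA
  subst hUh
  have hgap := mul_norm_sub_le_of_residual_le hγ.le
    (hgradB _ (norm_mul_transpose_le_sq hUb hVb)) hVb hlamb hres₁
  have hcurv : (2 * L0 * σ ^ 3 + 3 * L * σ) * ‖Ub - Vb‖ ^ 2 < 2 * ε :=
    mul_sq_lt_of_sqrt_mul_div_lt hγ (norm_nonneg _) hgap (by positivity)
      ((le_max_right _ _).trans_lt hγbig)
  have hsqrt : √(max nA 0 / 4) = √nA / 2 := by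
    rcases le_total nA 0 with h | h
    · simp [max_eq_right h, Real.sqrt_eq_zero_of_nonpos h]
    · rw [max_eq_left h, Real.sqrt_div' _ (by norm_num : (0 : ℝ) ≤ 4),
        show (4 : ℝ) = 2 ^ 2 by norm_num, Real.sqrt_sq (by norm_num)]
  have hsmall : max nA 0 / 4 * ‖Ub - Vb‖ ^ 2 < 2 * ε :=
    mul_sq_lt_of_sqrt_mul_div_lt hγ (norm_nonneg _) hgap (by positivity) <|
      Eq.trans_lt (by rw [hsqrt]; ring) ((le_max_left _ _).trans_lt hγbig)
  refine ⟨?_, ?_⟩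
  · rw [frobNorm_eq_norm]
    linarith [norm_bm_residual_le hL.le hL0.le hhess hgradLip hhessLip A lamb γ hUb hVb]
  · linarith [vecNorm_Aop_half_add_sub_le hAsym hnA b Ub Vb]

/-- Theorem 2.1, final claim: if γ is large enough, the averaged point
together with the doubled multiplier is a 3ε-KKT point of the Burer–Monteiro problem.
Here `nA` is any constant bounding the operator norm of 𝒜 (equivalent formulation). -/
theorem threeEps_KKT_transfer
    (n m r : ℕ) (hn : 0 < n) (hm : 0 < m) (hr : 0 < r)
    (f : Matrix (Fin n) (Fin n) ℝ → ℝ)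
    (hconv : ConvexOn ℝ Set.univ f)
    (hsym : ∀ X : Matrix (Fin n) (Fin n) ℝ, f Xᵀ = f X)
    (grad : Matrix (Fin n) (Fin n) ℝ → Matrix (Fin n) (Fin n) ℝ)
    (hgrad : ∀ X H : Matrix (Fin n) (Fin n) ℝ,
      HasDerivAt (fun t : ℝ => f (X + t • H)) (frobInner (grad X) H) 0)
    (hgradCont : Continuous grad)
    (hess : Matrix (Fin n) (Fin n) ℝ → Matrix (Fin n) (Fin n) ℝ → Matrix (Fin n) (Fin n) ℝ)
    (hhess : ∀ X H : Matrix (Fin n) (Fin n) ℝ, ∀ i j,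
      HasDerivAt (fun t : ℝ => grad (X + t • H) i j) (hess X H i j) 0)
    (A : Fin m → Matrix (Fin n) (Fin n) ℝ) (hAsym : ∀ i, (A i)ᵀ = A i)
    (b : Fin m → ℝ)
    (σ Lf L L0 γ : ℝ)
    (hσ : 0 < σ) (hLf : 0 < Lf) (hL : 0 < L) (hL0 : 0 < L0) (hγ : 0 < γ)
    (hgradB : ∀ X : Matrix (Fin n) (Fin n) ℝ, frobNorm X ≤ σ ^ 2 → frobNorm (grad X) ≤ Lf)
    (hgradLip : ∀ X Y : Matrix (Fin n) (Fin n) ℝ, frobNorm X ≤ σ ^ 2 → frobNorm Y ≤ σ ^ 2 →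
      frobNorm (grad X - grad Y) ≤ L * frobNorm (X - Y))
    (hhessLip : ∀ X Y H : Matrix (Fin n) (Fin n) ℝ, frobNorm X ≤ σ ^ 2 → frobNorm Y ≤ σ ^ 2 →
      frobNorm (hess X H - hess Y H) ≤ L0 * frobNorm H * frobNorm (X - Y))
    (nA : ℝ) (hnA : ∀ X : Matrix (Fin n) (Fin n) ℝ, vecNorm (Aop A X) ≤ nA * frobNorm X)
    (ε : ℝ) (hε : 0 < ε)
    (Ub Vb : Matrix (Fin n) (Fin r) ℝ) (lamb : Fin m → ℝ)
    (hKKT : IsPenEpsKKT grad A b γ ε Ub Vb lamb)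
    (hUb : frobNorm Ub ≤ σ) (hVb : frobNorm Vb ≤ σ) (hlamb : vecNorm lamb ≤ σ)
    (Uh : Matrix (Fin n) (Fin r) ℝ) (hUh : Uh = (2 : ℝ)⁻¹ • (Ub + Vb))
    (hγbig : γ > max
      (Real.sqrt nA * (ε + Lf * σ + Real.sqrt (sA A) * σ ^ 2) / (2 * Real.sqrt (2 * ε)))
      (Real.sqrt (2 * L0 * σ ^ 3 + 3 * L * σ) * (ε + Lf * σ + Real.sqrt (sA A) * σ ^ 2)
        / Real.sqrt (2 * ε))) :
    IsBMEpsKKT grad A b (3 * ε) Uh (fun i => 2 * lamb i) :=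
  threeEps_KKT_transfer_general n m r grad hess hhess A hAsym b σ Lf L L0 γ hL hL0 hγ hgradB
    hgradLip hhessLip nA hnA ε hε Ub Vb lamb hKKT hUb hVb hlamb Uh hUh hγbig
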